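/- The discrete Gaussian has variance at most that of the corresponding continuous Gaussian: For every real σ > 0, if X is distributed according to the discrete Gaussian N_ℤ(σ²), then X has mean 0 and Var(X) = E[X²] ≤ σ². -/

import Mathlib

/-- The discrete Gaussian mass function `N_ℤ(v)` (real-valued) with variance
parameter `v = σ²`. -/
noncomputable def discreteGaussianPMF (v : ℝ) (x : ℤ) : ℝ :=
  Real.exp (-(x : ℝ) ^ 2 / (2 * v)) / ∑' y : ℤ, Real.exp (-(y : ℝ) ^ 2 / (2 * v))

/-!
With `θ(a) = ∑ₙ exp(-π a n²)`, the discrete Gaussian `N_ℤ(v)` is `exp(-π a x²) / θ(a)` for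
`a = 1 / (2πv)`, and its second moment is `-θ'(a) / (π θ(a))`. Poisson summation gives Jacobi's
identity `θ(1/a) = √a θ(a)`. The left side is increasing in `a`, because `θ` is decreasing; so
the derivative `θ(a) / (2√a) + √a θ'(a)` of the right side is nonnegative, i.e.
`-θ'(a) ≤ θ(a) / (2a)`, which is exactly `E[X²] ≤ v`. The mean vanishes by symmetry.
-/

open Real

namespace DiscreteGaussian

noncomputable def theta (a : ℝ) : ℝ := ∑' n : ℤ, exp (-π * a * n ^ 2)

noncomputable def thetaSqMoment (a : ℝ) : ℝ := ∑' n : ℤ, (n : ℝ) ^ 2 * exp (-π * a * n ^ 2)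

variable {a : ℝ}

lemma summable_abs_pow_mul_exp_neg_mul_int_sq (ha : 0 < a) (k : ℕ) :
    Summable fun n : ℤ ↦ |(n : ℝ)| ^ k * exp (-π * a * n ^ 2) := by
  simpa [mul_assoc] using summable_pow_mul_jacobiTheta₂_term_bound 0 ha k

lemma summable_exp_neg_mul_int_sq (ha : 0 < a) :
    Summable fun n : ℤ ↦ exp (-π * a * n ^ 2) := by
  simpa using summable_abs_pow_mul_exp_neg_mul_int_sq ha 0

lemma summable_sq_mul_exp_neg_mul_int_sq (ha : 0 < a) :
    Summable fun n : ℤ ↦ (n : ℝ) ^ 2 * exp (-π * a * n ^ 2) := by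
  simpa using summable_abs_pow_mul_exp_neg_mul_int_sq ha 2

lemma theta_pos (ha : 0 < a) : 0 < theta a :=
  (summable_exp_neg_mul_int_sq ha).tsum_pos (fun _ ↦ (exp_pos _).le) 0 (exp_pos _)

lemma thetaSqMoment_nonneg (a : ℝ) : 0 ≤ thetaSqMoment a :=
  tsum_nonneg fun _ ↦ by positivity

lemma hasDerivAt_theta (ha : 0 < a) : HasDerivAt theta (-π * thetaSqMoment a) a := by
  have hterm (n : ℤ) (b : ℝ) : HasDerivAt (fun b ↦ exp (-π * b * n ^ 2))
      (-π * ((n : ℝ) ^ 2 * exp (-π * b * n ^ 2))) b := by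
    convert (((hasDerivAt_id' b).const_mul (-π)).mul_const ((n : ℝ) ^ 2)).exp using 1
    ring
  have hbound (n : ℤ) (b : ℝ) (hb : b ∈ Set.Ioi (a / 2)) :
      ‖-π * ((n : ℝ) ^ 2 * exp (-π * b * n ^ 2))‖ ≤
        π * ((n : ℝ) ^ 2 * exp (-π * (a / 2) * n ^ 2)) := by
    rw [norm_mul, norm_neg, Real.norm_of_nonneg pi_pos.le,
      Real.norm_of_nonneg (by positivity)]
    gcongr π * (_ * exp ?_)
    nlinarith [mul_nonneg (mul_nonneg pi_pos.le (sq_nonneg (n : ℝ))) (sub_nonneg.2 hb.le)]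
  have ha' : a ∈ Set.Ioi (a / 2) := half_lt_self ha
  have := hasDerivAt_tsum_of_isPreconnected
    ((summable_sq_mul_exp_neg_mul_int_sq (half_pos ha)).mul_left π) isOpen_Ioi
    isPreconnected_Ioi (fun n b _ ↦ hterm n b) hbound ha' (summable_exp_neg_mul_int_sq ha) ha'
  rwa [tsum_mul_left] at this

theorem theta_inv (ha : 0 < a) : theta a⁻¹ = √a * theta a := by
  rw [theta, Real.tsum_exp_neg_mul_int_sq (inv_pos.2 ha), ← sqrt_eq_rpow, sqrt_inv, one_div,
    inv_inv]
  simp only [div_inv_eq_mul]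
  rfl

theorem two_mul_pi_mul_thetaSqMoment_le (ha : 0 < a) :
    2 * π * a * thetaSqMoment a ≤ theta a := by
  have hinv : HasDerivAt (fun b ↦ theta b⁻¹)
      (-π * thetaSqMoment a⁻¹ * -(a ^ 2)⁻¹) a :=
    (hasDerivAt_theta (inv_pos.2 ha)).comp a (hasDerivAt_inv ha.ne')
  have hprod : HasDerivAt (fun b ↦ √b * theta b)
      (1 / (2 * √a) * theta a + √a * (-π * thetaSqMoment a)) a :=
    (hasDerivAt_sqrt ha.ne').mul (hasDerivAt_theta ha)
  have heq : (fun b ↦ theta b⁻¹) =ᶠ[nhds a] fun b ↦ √b * theta b :=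
    Filter.eventually_of_mem (Ioi_mem_nhds ha) fun b hb ↦ theta_inv hb
  have hderiv := hinv.unique (hprod.congr_of_eventuallyEq heq)
  have hnonneg : 0 ≤ -π * thetaSqMoment a⁻¹ * -(a ^ 2)⁻¹ := by
    have := thetaSqMoment_nonneg a⁻¹
    have := pi_pos
    rw [neg_mul, neg_mul_neg]
    positivity
  rw [hderiv] at hnonneg
  field_simp at hnonneg
  rw [sq_sqrt ha.le] at hnonneg
  linarith

end DiscreteGaussian

open DiscreteGaussian

lemma discreteGaussianPMF_neg (v : ℝ) (x : ℤ) :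
    discreteGaussianPMF v (-x) = discreteGaussianPMF v x := by
  rw [discreteGaussianPMF, discreteGaussianPMF, Int.cast_neg, neg_sq]

theorem tsum_mul_discreteGaussianPMF (v : ℝ) :
    ∑' x : ℤ, (x : ℝ) * discreteGaussianPMF v x = 0 := by
  have hodd : ∑' x : ℤ, (x : ℝ) * discreteGaussianPMF v x =
      -∑' x : ℤ, (x : ℝ) * discreteGaussianPMF v x := by
    rw [← tsum_neg, ← (Equiv.neg ℤ).tsum_eq]
    refine tsum_congr fun x ↦ ?_
    rw [Equiv.neg_apply, discreteGaussianPMF_neg, Int.cast_neg, neg_mul]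
  linarith

lemma discreteGaussianPMF_eq_div_theta {v : ℝ} (hv : 0 < v) (x : ℤ) :
    discreteGaussianPMF v x = exp (-π * (2 * π * v)⁻¹ * x ^ 2) / theta (2 * π * v)⁻¹ := by
  have hexp (y : ℤ) : -(y : ℝ) ^ 2 / (2 * v) = -π * (2 * π * v)⁻¹ * y ^ 2 := by
    field_simp
  simp only [discreteGaussianPMF, theta, hexp]

theorem tsum_sq_mul_discreteGaussianPMF_le {v : ℝ} (hv : 0 < v) :
    ∑' x : ℤ, (x : ℝ) ^ 2 * discreteGaussianPMF v x ≤ v := by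
  have ha : 0 < (2 * π * v)⁻¹ := by positivity
  have hmoment : ∑' x : ℤ, (x : ℝ) ^ 2 * discreteGaussianPMF v x =
      thetaSqMoment (2 * π * v)⁻¹ / theta (2 * π * v)⁻¹ := by
    simp only [discreteGaussianPMF_eq_div_theta hv, ← mul_div_assoc, tsum_div_const]
    rfl
  have hkey := two_mul_pi_mul_thetaSqMoment_le ha
  rw [hmoment, div_le_iff₀ (theta_pos ha)]
  have htwo_pi : 2 * π * (2 * π * v)⁻¹ = v⁻¹ := by field_simp
  rwa [htwo_pi, inv_mul_le_iff₀ hv] at hkey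

/-- The discrete Gaussian `N_ℤ(σ²)` has mean `0` and variance
`Var(X) = E[X²]` at most `σ²`. -/
theorem discreteGaussian_variance_le (σ : ℝ) (hσ : 0 < σ) :
    (∑' x : ℤ, (x : ℝ) * discreteGaussianPMF (σ ^ 2) x) = 0 ∧
    (∑' x : ℤ, (x : ℝ) ^ 2 * discreteGaussianPMF (σ ^ 2) x) ≤ σ ^ 2 :=
  ⟨tsum_mul_discreteGaussianPMF _, tsum_sq_mul_discreteGaussianPMF_le (pow_pos hσ 2)⟩
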